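/- Let R, C be n×n positive definite matrices, let a, b ≥ 0, and let 0 ≤ c ≤ 2ab. Then the eigenvalue vector of a²R^{-1}CR^{-1} + b²RCR + cC is weakly majorized by the eigenvalue vector of (aR^{-1} + bR) C (aR^{-1} + bR). Moreover, if c = 2ab, the weak majorization is a majorization. -/

import Mathlib

/-!
Put `X = aR⁻¹ + bR`, which commutes with `R`, and `S = XCX`; if `a = b = 0` both matrices vanish,
otherwise `X` is invertible. With weights `w = (a², b², c)` and `L = (R⁻¹, R, 1)`, the Hermitian
matrices `Kᵢ = X⁻¹Lᵢ` write the left-hand matrix as `T = Σ wᵢ Kᵢ S Kᵢ`, and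
`Σ wᵢ Kᵢ² = X⁻¹ (Σ wᵢ Lᵢ²) X⁻¹ = 1 - (2ab - c) X⁻² ≤ 1`.
For such a sandwich `T ≺_w S` by Ky Fan's maximum principle: if `P` is the projection onto the
eigenvectors of `T` indexed by `s`, then `Σ_{i ∈ s} λᵢ(T) = tr (PT) = tr (QS)` with
`Q = Σ wᵢ Kᵢ P Kᵢ`, and `0 ≤ Q ≤ 1`, `tr Q ≤ tr P = |s|`, so `tr (QS)` is at most the sum of
the `|s|` largest eigenvalues of `S ≥ 0`. When `c = 2ab`, `Σ wᵢ Lᵢ² = X²` and the traces agree.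
-/

open Matrix ComplexOrder

namespace Matrix.PosSemidef

/-- Restored from the older Mathlib (removed upstream), with its old definition. -/
noncomputable def sqrt {m : Type*} [Fintype m] [DecidableEq m] {𝕜 : Type*} [RCLike 𝕜]
    {A : Matrix m m 𝕜} (hA : A.PosSemidef) : Matrix m m 𝕜 :=
  hA.1.eigenvectorUnitary.1 * diagonal ((↑) ∘ (√·) ∘ hA.1.eigenvalues) *
    (star hA.1.eigenvectorUnitary : Matrix m m 𝕜)

lemma posSemidef_sqrt {m : Type*} [Fintype m] [DecidableEq m] {𝕜 : Type*} [RCLike 𝕜]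
    {A : Matrix m m 𝕜} (hA : A.PosSemidef) : hA.sqrt.PosSemidef := by
  have hd : (diagonal ((↑) ∘ (√·) ∘ hA.1.eigenvalues) : Matrix m m 𝕜).PosSemidef :=
    posSemidef_diagonal_iff.mpr fun i => by
      simp only [Function.comp_apply, RCLike.ofReal_nonneg]
      exact Real.sqrt_nonneg _
  have h := hd.mul_mul_conjTranspose_same (hA.1.eigenvectorUnitary : Matrix m m 𝕜)
  unfold sqrt
  exact h

end Matrix.PosSemidef

namespace Heron

variable {n : ℕ}

def WeakMaj {n : ℕ} (x y : Fin n → ℝ) : Prop :=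
  ∀ s : Finset (Fin n), ∃ t : Finset (Fin n),
    t.card = s.card ∧ ∑ i ∈ s, x i ≤ ∑ i ∈ t, y i

def Maj {n : ℕ} (x y : Fin n → ℝ) : Prop :=
  WeakMaj x y ∧ ∑ i, x i = ∑ i, y i

lemma sandwich_posSemidef {S T : Matrix (Fin n) (Fin n) ℂ} (hS : S.IsHermitian)
    (hT : T.PosSemidef) : (S * T * S).PosSemidef := by
  have h := hT.mul_mul_conjTranspose_same S
  rwa [hS.eq] at h

noncomputable def geomMean {A B : Matrix (Fin n) (Fin n) ℂ}
    (hA : A.PosDef) (hB : B.PosDef) : Matrix (Fin n) (Fin n) ℂ :=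
  hA.posSemidef.sqrt *
    (sandwich_posSemidef hA.posSemidef.posSemidef_sqrt.isHermitian.inv
        hB.posSemidef).sqrt *
    hA.posSemidef.sqrt

lemma geomMean_posSemidef {A B : Matrix (Fin n) (Fin n) ℂ}
    (hA : A.PosDef) (hB : B.PosDef) : (geomMean hA hB).PosSemidef :=
  sandwich_posSemidef hA.posSemidef.posSemidef_sqrt.isHermitian
    (Matrix.PosSemidef.posSemidef_sqrt _)

noncomputable def specMean {A B : Matrix (Fin n) (Fin n) ℂ}
    (hA : A.PosDef) (hB : B.PosDef) : Matrix (Fin n) (Fin n) ℂ :=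
  (geomMean_posSemidef hA.inv hB).sqrt * A * (geomMean_posSemidef hA.inv hB).sqrt

def HasPosSpectrum (M : Matrix (Fin n) (Fin n) ℂ) : Prop :=
  ∀ z ∈ spectrum ℂ M, 0 < z.re ∧ z.im = 0

def IsPrincipalSqrt (M S : Matrix (Fin n) (Fin n) ℂ) : Prop :=
  S * S = M ∧ HasPosSpectrum S

noncomputable def absMat (Y : Matrix (Fin n) (Fin n) ℂ) : Matrix (Fin n) (Fin n) ℂ :=
  (Matrix.posSemidef_conjTranspose_mul_self Y).sqrt

noncomputable def posPart (H : Matrix (Fin n) (Fin n) ℂ) : Matrix (Fin n) (Fin n) ℂ :=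
  ((1 : ℂ) / 2) • (absMat H + H)

end Heron

open scoped MatrixOrder

section

variable {ι : Type*} [Fintype ι]

theorem exists_top_finset_card_eq {α : Type*} [LinearOrder α] (f : ι → α) {k : ℕ}
    (hk : k ≤ Fintype.card ι) : ∃ t : Finset ι, t.card = k ∧ ∀ i ∈ t, ∀ j ∉ t, f j ≤ f i := by
  classical
  induction k with
  | zero => exact ⟨∅, rfl, by simp⟩
  | succ k ih =>
    obtain ⟨t, rfl, ht⟩ := ih (by omega)
    obtain ⟨j₀, hj₀, hmax⟩ := tᶜ.exists_max_image f
      (by rw [← Finset.card_pos, Finset.card_compl]; omega)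
    rw [Finset.mem_compl] at hj₀
    refine ⟨insert j₀ t, Finset.card_insert_of_notMem hj₀, fun i hi j hj => ?_⟩
    rw [Finset.mem_insert, not_or] at hj
    rcases Finset.mem_insert.mp hi with rfl | hi
    · exact hmax j (Finset.mem_compl.mpr hj.2)
    · exact ht i hi j hj.2

theorem sum_mul_le_sum_of_top {f c : ι → ℝ} {t : Finset ι} (hf : ∀ i, 0 ≤ f i)
    (hc0 : ∀ i, 0 ≤ c i) (hc1 : ∀ i, c i ≤ 1) (hct : ∑ i, c i ≤ t.card)
    (ht : ∀ i ∈ t, ∀ j ∉ t, f j ≤ f i) : ∑ i, f i * c i ≤ ∑ i ∈ t, f i := by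
  classical
  -- a threshold between the values of `f` off `t` and on `t` (an empty supremum is `0` in `ℝ`)
  set μ := ⨆ j : ↥tᶜ, f j
  have hμ0 : 0 ≤ μ := Real.iSup_nonneg fun j => hf j
  have hμ_le : ∀ i ∈ t, μ ≤ f i := fun i hi =>
    Real.iSup_le (fun j => ht i hi j (Finset.mem_compl.mp j.2)) (hf i)
  have hle_μ : ∀ j ∉ t, f j ≤ μ := fun j hj =>
    le_ciSup (f := fun j : ↥tᶜ => f j) (Finite.bddAbove_range _) ⟨j, Finset.mem_compl.mpr hj⟩
  have hexcess : ∑ i, (f i - μ) * c i ≤ ∑ i ∈ t, (f i - μ) := by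
    rw [← Finset.univ_inter t, ← Finset.sum_ite_mem]
    refine Finset.sum_le_sum fun i _ => ?_
    split_ifs with hi
    · exact mul_le_of_le_one_right (sub_nonneg.2 (hμ_le i hi)) (hc1 i)
    · exact mul_nonpos_of_nonpos_of_nonneg (sub_nonpos.2 (hle_μ i hi)) (hc0 i)
  have hmass : μ * ∑ i, c i ≤ ∑ _i ∈ t, μ := by
    rw [Finset.sum_const, nsmul_eq_mul, mul_comm _ μ]
    exact mul_le_mul_of_nonneg_left hct hμ0
  calc ∑ i, f i * c i = ∑ i, (f i - μ) * c i + μ * ∑ i, c i := by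
        rw [Finset.mul_sum, ← Finset.sum_add_distrib]; congr 1; ext i; ring
    _ ≤ ∑ i ∈ t, (f i - μ) + ∑ _i ∈ t, μ := add_le_add hexcess hmass
    _ = ∑ i ∈ t, f i := by rw [← Finset.sum_add_distrib]; simp

end

namespace Matrix

variable {m 𝕜 : Type*} [Fintype m] [RCLike 𝕜]

instance : PosSMulMono 𝕜 (Matrix m m 𝕜) where
  smul_le_smul_of_nonneg_left _ ha _ _ h := by
    rw [le_iff, ← smul_sub]
    exact (le_iff.mp h).smul ha

theorem trace_mono {A B : Matrix m m 𝕜} (h : A ≤ B) : A.trace ≤ B.trace := by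
  simpa [trace_sub] using (le_iff.mp h).trace_nonneg

theorem trace_sum_smul_conj {ι : Type*} [Fintype ι] (w : ι → 𝕜) (K : ι → Matrix m m 𝕜)
    (B : Matrix m m 𝕜) :
    (∑ i, w i • (K i * B * K i)).trace = (B * ∑ i, w i • (K i * K i)).trace := by
  simp only [Finset.mul_sum, trace_sum, mul_smul_comm, trace_smul]
  refine Finset.sum_congr rfl fun i _ => ?_
  rw [trace_mul_cycle, trace_mul_comm]

variable [DecidableEq m]

theorem commute_inv_left {A B : Matrix m m 𝕜} (h : Commute A B) : Commute A⁻¹ B := by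
  by_cases hA : IsUnit A.det
  · let := A.invertibleOfIsUnitDet hA
    simpa only [invOf_eq_nonsing_inv] using h.invOf_left
  · rw [nonsing_inv_apply_not_isUnit A hA]
    exact Commute.zero_left B

theorem _root_.IsStarProjection.trace_mul_le_trace {P Z : Matrix m m 𝕜} (hP : IsStarProjection P)
    (hZ : Z ≤ 1) : (P * Z).trace ≤ P.trace := calc
  (P * Z).trace = (P * Z * P).trace := by rw [trace_mul_cycle, hP.isIdempotentElem.eq]
  _ ≤ (P * 1 * P).trace := trace_mono (hP.isSelfAdjoint.conjugate_le_conjugate hZ)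
  _ = P.trace := by rw [mul_one, hP.isIdempotentElem.eq]

namespace IsHermitian

variable {A : Matrix m m 𝕜} (hA : A.IsHermitian)

theorem trace_mul_eq_sum_diag_mul_eigenvalues (B : Matrix m m 𝕜) :
    (B * A).trace = ∑ i, (star (hA.eigenvectorUnitary : Matrix m m 𝕜) * B *
      hA.eigenvectorUnitary) i i * hA.eigenvalues i := by
  conv_lhs => rw [hA.spectral_theorem, Unitary.conjStarAlgAut_apply]
  rw [← mul_assoc, ← mul_assoc, trace_mul_cycle, ← mul_assoc]
  simp [trace, mul_diagonal]

noncomputable def eigenvectorProj (s : Finset m) : Matrix m m 𝕜 :=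
  Unitary.conjStarAlgAut 𝕜 _ hA.eigenvectorUnitary (diagonal fun i => if i ∈ s then 1 else 0)

theorem isStarProjection_eigenvectorProj (s : Finset m) :
    IsStarProjection (hA.eigenvectorProj s) := by
  have hD : IsStarProjection (diagonal (fun i => if i ∈ s then 1 else 0) : Matrix m m 𝕜) :=
    ⟨by simp [IsIdempotentElem, diagonal_mul_diagonal], by
      simp [IsSelfAdjoint, star_eq_conjTranspose, diagonal_conjTranspose]⟩
  exact hD.map _

theorem trace_eigenvectorProj_mul (s : Finset m) (B : Matrix m m 𝕜) :
    (hA.eigenvectorProj s * B).trace = ∑ i ∈ s, (star (hA.eigenvectorUnitary : Matrix m m 𝕜) * B *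
      hA.eigenvectorUnitary) i i := by
  rw [eigenvectorProj, Unitary.conjStarAlgAut_apply, mul_assoc, trace_mul_cycle]
  simp [trace, mul_diagonal, Finset.sum_ite_mem]

theorem trace_eigenvectorProj (s : Finset m) : (hA.eigenvectorProj s).trace = s.card := by
  simpa using hA.trace_eigenvectorProj_mul s 1

theorem trace_eigenvectorProj_mul_self (s : Finset m) :
    (hA.eigenvectorProj s * A).trace = ∑ i ∈ s, (hA.eigenvalues i : 𝕜) := by
  have hdiag := hA.conjStarAlgAut_star_eigenvectorUnitary
  rw [Unitary.conjStarAlgAut_star_apply] at hdiag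
  simp [hA.trace_eigenvectorProj_mul, hdiag]

end IsHermitian

theorem PosSemidef.re_trace_mul_le_sum_of_top {S Q : Matrix m m 𝕜} (hS : S.PosSemidef)
    (hQ0 : 0 ≤ Q) (hQ1 : Q ≤ 1) {t : Finset m} (hQt : RCLike.re Q.trace ≤ t.card)
    (ht : ∀ i ∈ t, ∀ j ∉ t, hS.isHermitian.eigenvalues j ≤ hS.isHermitian.eigenvalues i) :
    RCLike.re (Q * S).trace ≤ ∑ i ∈ t, hS.isHermitian.eigenvalues i := by
  set U : Matrix m m 𝕜 := ↑hS.isHermitian.eigenvectorUnitary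
  set M := star U * Q * U
  have hM0 : 0 ≤ M := star_left_conjugate_nonneg hQ0 U
  have hM1 : M ≤ 1 := by
    simpa [M, U] using star_left_conjugate_le_conjugate hQ1 U
  have hdiag0 (i : m) : 0 ≤ RCLike.re (M i i) :=
    (RCLike.nonneg_iff.mp hM0.posSemidef.diag_nonneg).1
  have hdiag1 (i : m) : RCLike.re (M i i) ≤ 1 := by
    simpa using (RCLike.nonneg_iff.mp ((le_iff.mp hM1).diag_nonneg (i := i))).1
  have htrM : ∑ i, RCLike.re (M i i) ≤ t.card := by
    have hMQ : M.trace = Q.trace := by simp [M, U, trace_mul_cycle]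
    rwa [← hMQ, trace, map_sum] at hQt
  rw [hS.isHermitian.trace_mul_eq_sum_diag_mul_eigenvalues, map_sum]
  simp_rw [RCLike.re_mul_ofReal, mul_comm (RCLike.re _)]
  exact sum_mul_le_sum_of_top hS.eigenvalues_nonneg hdiag0 hdiag1 htrM ht

end Matrix

namespace Heron

section

variable {n : ℕ} {𝕜 : Type*} [RCLike 𝕜] {ι : Type*} [Fintype ι]

theorem weakMaj_of_eq_sum_smul_conj {T S : Matrix (Fin n) (Fin n) 𝕜} (hT : T.IsHermitian)
    (hS : S.PosSemidef) (w : ι → 𝕜) (hw : ∀ i, 0 ≤ w i) (K : ι → Matrix (Fin n) (Fin n) 𝕜)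
    (hK : ∀ i, IsSelfAdjoint (K i)) (hTS : T = ∑ i, w i • (K i * S * K i))
    (hK1 : ∑ i, w i • (K i * K i) ≤ 1) :
    WeakMaj hT.eigenvalues hS.isHermitian.eigenvalues := by
  intro s
  obtain ⟨t, hts, ht⟩ := exists_top_finset_card_eq hS.isHermitian.eigenvalues s.card_le_univ
  refine ⟨t, hts, ?_⟩
  set P := hT.eigenvectorProj s
  have hP : IsStarProjection P := hT.isStarProjection_eigenvectorProj s
  set Q := ∑ i, w i • (K i * P * K i)
  have hQ0 : 0 ≤ Q :=
    Finset.sum_nonneg fun i _ => smul_nonneg (hw i) ((hK i).conjugate_nonneg hP.nonneg)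
  have hQ1 : Q ≤ 1 := calc
    Q ≤ ∑ i, w i • (K i * 1 * K i) := Finset.sum_le_sum fun i _ =>
      smul_le_smul_of_nonneg_left ((hK i).conjugate_le_conjugate hP.le_one) (hw i)
    _ ≤ 1 := by simpa using hK1
  have hQt : RCLike.re Q.trace ≤ t.card := calc
    RCLike.re Q.trace = RCLike.re (P * ∑ i, w i • (K i * K i)).trace := by
      rw [trace_sum_smul_conj]
    _ ≤ RCLike.re P.trace := RCLike.re_le_re (hP.trace_mul_le_trace hK1)
    _ = t.card := by
      rw [hT.trace_eigenvectorProj, hts]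
      simp
  have hPT : (P * T).trace = (Q * S).trace := by
    simp only [hTS, Q, Finset.mul_sum, Finset.sum_mul, trace_sum, mul_smul_comm, smul_mul_assoc,
      trace_smul]
    refine Finset.sum_congr rfl fun i _ => ?_
    rw [← mul_assoc, trace_mul_comm]
    simp only [mul_assoc]
  calc ∑ i ∈ s, hT.eigenvalues i = RCLike.re (P * T).trace := by
        rw [hT.trace_eigenvectorProj_mul_self]
        simp
    _ = RCLike.re (Q * S).trace := by rw [hPT]
    _ ≤ ∑ i ∈ t, hS.isHermitian.eigenvalues i :=
      hS.re_trace_mul_le_sum_of_top hQ0 hQ1 (hts ▸ hQt) ht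

theorem weakMaj_of_sum_smul_conj_le_sq {T X C : Matrix (Fin n) (Fin n) 𝕜} (hT : T.IsHermitian)
    (hS : (X * C * X).IsHermitian) (hX : IsSelfAdjoint X) (hXu : IsUnit X) (hC : 0 ≤ C)
    (w : ι → 𝕜) (hw : ∀ i, 0 ≤ w i) (L : ι → Matrix (Fin n) (Fin n) 𝕜)
    (hL : ∀ i, IsSelfAdjoint (L i)) (hXL : ∀ i, Commute X (L i))
    (hTL : T = ∑ i, w i • (L i * C * L i)) (hLX : ∑ i, w i • (L i * L i) ≤ X * X) :
    WeakMaj hT.eigenvalues hS.eigenvalues := by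
  have hXdet := (isUnit_iff_isUnit_det X).mp hXu
  have hX₁ : X⁻¹ * X = 1 := nonsing_inv_mul X hXdet
  have hX₂ : X * X⁻¹ = 1 := mul_nonsing_inv X hXdet
  have hY : IsSelfAdjoint X⁻¹ := IsHermitian.inv hX
  have hYL (i : ι) : Commute X⁻¹ (L i) := commute_inv_left (hXL i)
  refine weakMaj_of_eq_sum_smul_conj hT (hX.conjugate_nonneg hC).posSemidef w hw
    (fun i => X⁻¹ * L i) (fun i => ?_) ?_ ?_
  · rw [IsSelfAdjoint, star_mul, (hL i).star_eq, hY.star_eq, (hYL i).eq]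
  · rw [hTL]
    refine Finset.sum_congr rfl fun i _ => ?_
    have hYLX : X⁻¹ * L i * X = L i := by rw [mul_assoc, ← (hXL i).eq, ← mul_assoc, hX₁, one_mul]
    calc w i • (L i * C * L i)
        = w i • ((X⁻¹ * L i * X) * C * (X * X⁻¹ * L i)) := by rw [hYLX, hX₂, one_mul]
      _ = w i • (X⁻¹ * L i * (X * C * X) * (X⁻¹ * L i)) := by simp only [mul_assoc]
  · calc ∑ i, w i • (X⁻¹ * L i * (X⁻¹ * L i))
        = X⁻¹ * (∑ i, w i • (L i * L i)) * X⁻¹ := by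
          simp only [Finset.mul_sum, Finset.sum_mul, mul_smul_comm, smul_mul_assoc]
          refine Finset.sum_congr rfl fun i _ => ?_
          simp only [mul_assoc, (hYL i).symm.eq]
      _ ≤ X⁻¹ * (X * X) * X⁻¹ := hY.conjugate_le_conjugate hLX
      _ = 1 := by rw [← mul_assoc, hX₁, one_mul, hX₂]

theorem sum_eigenvalues_eq_of_sum_smul_sq_eq {T X C : Matrix (Fin n) (Fin n) 𝕜}
    (hT : T.IsHermitian) (hS : (X * C * X).IsHermitian) (w : ι → 𝕜)
    (L : ι → Matrix (Fin n) (Fin n) 𝕜) (hTL : T = ∑ i, w i • (L i * C * L i))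
    (hLX : ∑ i, w i • (L i * L i) = X * X) :
    ∑ i, hT.eigenvalues i = ∑ i, hS.eigenvalues i := by
  have htrace : T.trace = (X * C * X).trace := by
    rw [hTL, trace_sum_smul_conj, hLX, trace_mul_comm C, trace_mul_cycle X C X]
  rw [hT.trace_eq_sum_eigenvalues, hS.trace_eq_sum_eigenvalues] at htrace
  exact_mod_cast htrace

theorem maj_of_eq {A B : Matrix (Fin n) (Fin n) 𝕜} (hA : A.IsHermitian) (hB : B.IsHermitian)
    (h : A = B) : Maj hA.eigenvalues hB.eigenvalues := by
  subst h
  exact ⟨fun s => ⟨s, rfl, le_rfl⟩, rfl⟩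

end

section

variable {n : ℕ}

def schurWeights (a b c : ℝ) : Fin 3 → ℂ := ![(a : ℂ) ^ 2, (b : ℂ) ^ 2, (c : ℂ)]

noncomputable def schurFactors (R : Matrix (Fin n) (Fin n) ℂ) : Fin 3 → Matrix (Fin n) (Fin n) ℂ := ![R⁻¹, R, 1]

theorem schurWeights_nonneg (a b : ℝ) {c : ℝ} (hc : 0 ≤ c) (i : Fin 3) :
    0 ≤ schurWeights a b c i := by
  fin_cases i <;> simp [schurWeights, ← Complex.ofReal_pow, sq_nonneg, hc]

theorem isSelfAdjoint_schurFactors {R : Matrix (Fin n) (Fin n) ℂ} (hR : R.IsHermitian)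
    (i : Fin 3) : IsSelfAdjoint (schurFactors R i) := by
  fin_cases i
  exacts [hR.inv, hR, IsSelfAdjoint.one _]

theorem commute_schurFactors (R : Matrix (Fin n) (Fin n) ℂ) (a b : ℂ) (i : Fin 3) :
    Commute (a • R⁻¹ + b • R) (schurFactors R i) := by
  have hRinv : Commute R⁻¹ R := commute_inv_left (Commute.refl R)
  fin_cases i
  · exact ((Commute.refl _).smul_left _).add_left (hRinv.symm.smul_left _)
  · exact (hRinv.smul_left _).add_left ((Commute.refl _).smul_left _)
  · exact Commute.one_right _

theorem sum_schurWeights_smul_conj (R C : Matrix (Fin n) (Fin n) ℂ) (a b c : ℝ) :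
    ∑ i, schurWeights a b c i • (schurFactors R i * C * schurFactors R i) =
      (a : ℂ) ^ 2 • (R⁻¹ * C * R⁻¹) + (b : ℂ) ^ 2 • (R * C * R) + (c : ℂ) • C := by
  simp [schurWeights, schurFactors, Fin.sum_univ_three]

theorem sq_sub_sum_schurWeights_smul_sq {R : Matrix (Fin n) (Fin n) ℂ} (hR : IsUnit R.det)
    (a b c : ℝ) :
    ((a : ℂ) • R⁻¹ + (b : ℂ) • R) * ((a : ℂ) • R⁻¹ + (b : ℂ) • R) -
        ∑ i, schurWeights a b c i • (schurFactors R i * schurFactors R i) =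
      ((2 * a * b - c : ℝ) : ℂ) • 1 := by
  simp only [schurWeights, schurFactors, Fin.sum_univ_three, cons_val, add_mul, mul_add,
    smul_mul_assoc, mul_smul_comm, mul_one, mul_nonsing_inv R hR, nonsing_inv_mul R hR]
  push_cast
  module

theorem posDef_smul_inv_add_smul {R : Matrix (Fin n) (Fin n) ℂ} (hR : R.PosDef) {a b : ℝ}
    (ha : 0 ≤ a) (hb : 0 ≤ b) (hab : 0 < a + b) : ((a : ℂ) • R⁻¹ + (b : ℂ) • R).PosDef := by
  rcases ha.lt_or_eq with ha | rfl
  · exact (hR.inv.smul (Complex.zero_lt_real.mpr ha)).add_posSemidef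
      (hR.posSemidef.smul (Complex.zero_le_real.mpr hb))
  · simpa using hR.smul (Complex.zero_lt_real.mpr (by linarith : 0 < b))

end

/-- the abstract Schur-multiplier reduction:
`a²R⁻¹CR⁻¹ + b²RCR + cC ≺_w (aR⁻¹ + bR) C (aR⁻¹ + bR)` for `0 ≤ c ≤ 2ab`,
with majorization at `c = 2ab`. -/
theorem abstract_schur_reduction {n : ℕ} (R C : Matrix (Fin n) (Fin n) ℂ)
    (hR : R.PosDef) (hC : C.PosDef)
    (a b c : ℝ) (ha : 0 ≤ a) (hb : 0 ≤ b) (hc0 : 0 ≤ c) (hc : c ≤ 2 * a * b)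
    (hT : (((a : ℂ) ^ 2) • (R⁻¹ * C * R⁻¹) + ((b : ℂ) ^ 2) • (R * C * R)
        + (c : ℂ) • C).IsHermitian)
    (hS : ((((a : ℂ) • R⁻¹ + (b : ℂ) • R) * C
        * ((a : ℂ) • R⁻¹ + (b : ℂ) • R))).IsHermitian) :
    WeakMaj hT.eigenvalues hS.eigenvalues ∧
      (c = 2 * a * b → Maj hT.eigenvalues hS.eigenvalues) := by
  rcases (add_nonneg ha hb).eq_or_lt with hab | hab
  · obtain rfl : a = 0 := by linarith
    obtain rfl : b = 0 := by linarith
    obtain rfl : c = 0 := by linarith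
    have h := maj_of_eq hT hS (by simp)
    exact ⟨h.1, fun _ => h⟩
  have hX := posDef_smul_inv_add_smul hR ha hb hab
  have hTL := (sum_schurWeights_smul_conj R C a b c).symm
  have hLX := sq_sub_sum_schurWeights_smul_sq ((isUnit_iff_isUnit_det R).mp hR.isUnit) a b c
  have hweak : WeakMaj hT.eigenvalues hS.eigenvalues :=
    weakMaj_of_sum_smul_conj_le_sq hT hS hX.isHermitian hX.isUnit hC.posSemidef.nonneg _
      (schurWeights_nonneg a b hc0) _ (isSelfAdjoint_schurFactors hR.isHermitian)
      (commute_schurFactors R _ _) hTL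
      (le_iff.mpr (hLX ▸ PosSemidef.one.smul (Complex.zero_le_real.mpr (by linarith))))
  refine ⟨hweak, fun hc2 => ⟨hweak, sum_eigenvalues_eq_of_sum_smul_sq_eq hT hS _ _ hTL ?_⟩⟩
  rw [eq_comm, ← sub_eq_zero, hLX, hc2, sub_self, Complex.ofReal_zero, zero_smul]

end Heron
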